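/- Let n have exactly two distinct prime factors p and q. Then every α ∈ V_n ∩ (ℤ_{≥0})^n can be written as Σ_{i=0}^{n_p-1} c_i v^(p)_i + Σ_{i=0}^{n_q-1} d_i v^(q)_i with non-negative integers c_i, d_i. -/

import Mathlib

/-- The `k`-th standard basis vector of `ℤ^n`. -/
def stdVec (n : ℕ) (k : ℕ) : Fin n → ℤ := fun m => if (m : ℕ) = k then 1 else 0

/-- `v^(d)_i = ∑_{j=0}^{d-1} e_{i + (n/d) j}` in `ℤ^n`. -/
def cycVec (n d : ℕ) (i : ℕ) : Fin n → ℤ := ∑ j ∈ Finset.range d, stdVec n (i + (n / d) * j)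

/-!
Over `ℚ`, the vectors `m ↦ c (m mod n/p) + d (m mod n/q)` lie in `V_n`. They form a space of
dimension `n/p + n/q - n/(pq)`: by the Chinese remainder theorem a pair `(c, d)` giving `0` is
determined by the first `gcd (n/p) (n/q) = n/(pq)` values of `c`. Since `φ(n) = n (1 - 1/p) (1 - 1/q)`,
this is also `dim V_n = n - φ(n)`, so every `α ∈ V_n` has this shape. Again by the Chinese remainder
theorem, each `c x + d y` with `x ≡ y mod n/(pq)` is a value of `α`; when `α ≥ 0`, moving the
minimum of `c` on each class mod `n/(pq)` from `c` to `d` makes both `ℕ`-valued.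
-/

open Finset Module Submodule

lemma exists_fin_mod_eq_and_mod_eq {n A B x y : ℕ} (hn : 0 < n) (hA : A ∣ n) (hB : B ∣ n)
    (hx : x < A) (hy : y < B) (hxy : x % A.gcd B = y % A.gcd B) :
    ∃ m : Fin n, (m : ℕ) % A = x ∧ (m : ℕ) % B = y := by
  obtain ⟨k, hkA, hkB⟩ := Nat.chineseRemainder' hxy
  refine ⟨⟨k % n, Nat.mod_lt _ hn⟩, ?_, ?_⟩
  · rw [Nat.mod_mod_of_dvd _ hA, hkA, Nat.mod_eq_of_lt hx]
  · rw [Nat.mod_mod_of_dvd _ hB, hkB, Nat.mod_eq_of_lt hy]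

lemma IsPrimitiveRoot.range_pow_fin_eq_powers {M : Type*} [CommMonoid M] {ζ : M} {n : ℕ}
    (hζ : IsPrimitiveRoot ζ n) (hn : 0 < n) :
    Set.range (fun m : Fin n => ζ ^ (m : ℕ)) = Submonoid.powers ζ := by
  ext x
  constructor
  · rintro ⟨m, rfl⟩
    exact ⟨m, rfl⟩
  · rintro ⟨k, rfl⟩
    exact ⟨⟨k % n, Nat.mod_lt _ hn⟩, by simp only [hζ.eq_orderOf, pow_mod_orderOf]⟩

lemma IsPrimitiveRoot.sum_mul_pow_eq_zero_of_dvd {R : Type*} [CommRing R] [IsDomain R] {ζ : R}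
    {n A : ℕ} [NeZero A] (hζ : IsPrimitiveRoot ζ n) (hA : A ∣ n) (hAn : A < n) (e : Fin A → R) :
    ∑ m : Fin n, e (Fin.ofNat A m) * ζ ^ (m : ℕ) = 0 := by
  obtain ⟨r, rfl⟩ := hA
  have hr : 1 < r := by
    by_contra! h
    interval_cases r <;> simp at hAn
  rw [mul_comm] at hζ ⊢
  have hζA : IsPrimitiveRoot (ζ ^ A) r :=
    hζ.pow (Nat.mul_pos (by omega) (NeZero.pos A)) (mul_comm r A)
  rw [← finProdFinEquiv.sum_comp, Fintype.sum_prod_type, Finset.sum_comm]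
  refine Finset.sum_eq_zero fun x _ => ?_
  have hx : ∀ j : ℕ, Fin.ofNat A (x + A * j) = x := fun j => by
    ext
    simp [Nat.mod_eq_of_lt x.2]
  simp only [finProdFinEquiv_apply_val, hx, pow_add, pow_mul]
  rw [← Finset.mul_sum, ← Finset.mul_sum, Fin.sum_univ_eq_sum_range (fun j => (ζ ^ A) ^ j),
    hζA.geom_sum_eq_zero hr, mul_zero, mul_zero]

section ResidueSum

variable {n A B : ℕ} [NeZero A] [NeZero B]

-- With `A = n/p` and `B = n/q`, `(c, d)` is sent to `∑ c_i v^(p)_i + ∑ d_i v^(q)_i`.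
def residueSum (n A B : ℕ) [NeZero A] [NeZero B] :
    ((Fin A → ℚ) × (Fin B → ℚ)) →ₗ[ℚ] (Fin n → ℚ) :=
  (LinearMap.funLeft ℚ ℚ fun m : Fin n => Fin.ofNat A m).coprod
    (LinearMap.funLeft ℚ ℚ fun m : Fin n => Fin.ofNat B m)

lemma residueSum_apply (cd : (Fin A → ℚ) × (Fin B → ℚ)) (m : Fin n) :
    residueSum n A B cd m = cd.1 (Fin.ofNat A m) + cd.2 (Fin.ofNat B m) :=
  rfl

lemma residueSum_apply_of_mod_eq (cd : (Fin A → ℚ) × (Fin B → ℚ)) {m : Fin n} {x : Fin A}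
    {y : Fin B} (hx : (m : ℕ) % A = x) (hy : (m : ℕ) % B = y) :
    residueSum n A B cd m = cd.1 x + cd.2 y := by
  rw [residueSum_apply, show Fin.ofNat A m = x from Fin.ext (by simpa),
    show Fin.ofNat B m = y from Fin.ext (by simpa)]

lemma finrank_ker_residueSum_le (hn : 0 < n) (hA : A ∣ n) (hB : B ∣ n) :
    finrank ℚ (LinearMap.ker (residueSum n A B)) ≤ A.gcd B := by
  set G := A.gcd B
  have hGA : G ≤ A := Nat.le_of_dvd (NeZero.pos A) (Nat.gcd_dvd_left A B)
  have hGB : G ≤ B := Nat.le_of_dvd (NeZero.pos B) (Nat.gcd_dvd_right A B)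
  have hG : 0 < G := Nat.gcd_pos_of_pos_left B (NeZero.pos A)
  let restrict := (LinearMap.funLeft ℚ ℚ (Fin.castLE hGA)) ∘ₗ
    LinearMap.fst ℚ (Fin A → ℚ) (Fin B → ℚ)
  suffices Function.Injective (restrict.domRestrict (LinearMap.ker (residueSum n A B))) by
    simpa using LinearMap.finrank_le_finrank_of_injective this
  refine (injective_iff_map_eq_zero _).2 fun ⟨⟨c, d⟩, hcd⟩ hres => ?_
  have hc : ∀ t : Fin G, c (Fin.castLE hGA t) = 0 := fun t => congr_fun hres t
  have hzero : ∀ (x : Fin A) (y : Fin B), (x : ℕ) % G = y % G → c x + d y = 0 := fun x y hxy => by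
    obtain ⟨m, hmA, hmB⟩ := exists_fin_mod_eq_and_mod_eq hn hA hB x.2 y.2 hxy
    rw [← residueSum_apply_of_mod_eq (n := n) (c, d) hmA hmB, LinearMap.mem_ker.1 hcd]
    rfl
  have hd : ∀ y : Fin B, d y = 0 := fun y => by
    have := hzero (Fin.castLE hGA ⟨y % G, Nat.mod_lt _ hG⟩) y (Nat.mod_mod _ _)
    rwa [hc, zero_add] at this
  have hc' : ∀ x : Fin A, c x = 0 := fun x => by
    have := hzero x (Fin.castLE hGB ⟨x % G, Nat.mod_lt _ hG⟩) (Nat.mod_mod _ _).symm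
    rwa [hd, add_zero] at this
  ext1
  exact Prod.ext (funext hc') (funext hd)

end ResidueSum

section Rational

variable {K : Type*} [Field K] [CharZero K] {ζ : K} {n : ℕ}

lemma IsPrimitiveRoot.finrank_span_range_pow (hζ : IsPrimitiveRoot ζ n) (hn : 0 < n) :
    finrank ℚ (span ℚ (Set.range fun m : Fin n => ζ ^ (m : ℕ))) = n.totient := by
  have : NeZero n := ⟨hn.ne'⟩
  have := hζ.adjoin_isCyclotomicExtension ℚ
  rw [hζ.range_pow_fin_eq_powers hn, Submonoid.powers_eq_closure, ← Algebra.adjoin_eq_span,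
    Subalgebra.finrank_toSubmodule,
    IsCyclotomicExtension.finrank _ (Polynomial.cyclotomic.irreducible_rat hn)]

variable {A B : ℕ} [NeZero A] [NeZero B]

lemma IsPrimitiveRoot.range_residueSum_le_ker (hζ : IsPrimitiveRoot ζ n) (hA : A ∣ n)
    (hAn : A < n) (hB : B ∣ n) (hBn : B < n) :
    LinearMap.range (residueSum n A B) ≤
      LinearMap.ker (Fintype.linearCombination ℚ fun m : Fin n => ζ ^ (m : ℕ)) := by
  rintro _ ⟨⟨c, d⟩, rfl⟩
  simp only [LinearMap.mem_ker, Fintype.linearCombination_apply, residueSum_apply, add_smul,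
    Finset.sum_add_distrib, Rat.smul_def]
  rw [hζ.sum_mul_pow_eq_zero_of_dvd hA hAn (fun x => (c x : K)),
    hζ.sum_mul_pow_eq_zero_of_dvd hB hBn (fun y => (d y : K)), add_zero]

lemma IsPrimitiveRoot.range_residueSum_eq_ker (hζ : IsPrimitiveRoot ζ n) (hA : A ∣ n)
    (hAn : A < n) (hB : B ∣ n) (hBn : B < n) (hdim : n + A.gcd B ≤ A + B + n.totient) :
    LinearMap.range (residueSum n A B) =
      LinearMap.ker (Fintype.linearCombination ℚ fun m : Fin n => ζ ^ (m : ℕ)) := by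
  have hn : 0 < n := by omega
  refine Submodule.eq_of_le_of_finrank_le (hζ.range_residueSum_le_ker hA hAn hB hBn) ?_
  have hf := LinearMap.finrank_range_add_finrank_ker
    (Fintype.linearCombination ℚ fun m : Fin n => ζ ^ (m : ℕ))
  rw [Fintype.range_linearCombination, hζ.finrank_span_range_pow hn, finrank_fin_fun] at hf
  have hΦ := LinearMap.finrank_range_add_finrank_ker (residueSum n A B)
  rw [finrank_prod, finrank_fin_fun, finrank_fin_fun] at hΦ
  have := finrank_ker_residueSum_le (n := n) hn hA hB
  omega

lemma IsPrimitiveRoot.exists_residue_decomposition (hζ : IsPrimitiveRoot ζ n) (hA : A ∣ n)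
    (hAn : A < n) (hB : B ∣ n) (hBn : B < n) (hdim : n + A.gcd B ≤ A + B + n.totient)
    {α : Fin n → ℚ} (hα : ∑ m : Fin n, (α m : K) * ζ ^ (m : ℕ) = 0) :
    ∃ c d : ℕ → ℚ, ∀ m : Fin n, α m = c (m % A) + d (m % B) := by
  have hmem : α ∈ LinearMap.range (residueSum n A B) := by
    rw [hζ.range_residueSum_eq_ker hA hAn hB hBn hdim, LinearMap.mem_ker,
      Fintype.linearCombination_apply, ← hα]
    simp only [Rat.smul_def]
  obtain ⟨cd, rfl⟩ := hmem
  refine ⟨fun x => cd.1 (Fin.ofNat A x), fun y => cd.2 (Fin.ofNat B y), fun m => ?_⟩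
  exact residueSum_apply_of_mod_eq cd (by simp) (by simp)

end Rational

lemma exists_nat_residue_decomposition {n A B : ℕ} (hn : 0 < n) (hA : A ∣ n) (hB : B ∣ n)
    {α : Fin n → ℤ} (hα : ∀ m, 0 ≤ α m) {c d : ℕ → ℚ}
    (hcd : ∀ m : Fin n, (α m : ℚ) = c (m % A) + d (m % B)) :
    ∃ c' d' : ℕ → ℕ, ∀ m : Fin n, α m = c' (m % A) + d' (m % B) := by
  set G := A.gcd B
  have hA0 : 0 < A := Nat.pos_of_dvd_of_pos hA hn
  have hG : 0 < G := Nat.gcd_pos_of_pos_left B hA0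
  have hGA : G ≤ A := Nat.le_of_dvd hA0 (Nat.gcd_dvd_left A B)
  have hGB : G ≤ B := Nat.le_of_dvd (Nat.pos_of_dvd_of_pos hB hn) (Nat.gcd_dvd_right A B)
  have hval : ∀ x < A, ∀ y < B, x % G = y % G → ∃ k : ℕ, c x + d y = k := by
    intro x hx y hy hxy
    obtain ⟨m, rfl, rfl⟩ := exists_fin_mod_eq_and_mod_eq hn hA hB hx hy hxy
    exact ⟨(α m).toNat, by rw [← hcd m]; exact_mod_cast (Int.toNat_of_nonneg (hα m)).symm⟩
  have hlow : ∀ r, ∃ x₀ < A, x₀ % G = r % G ∧ ∀ x < A, x % G = r % G → c x₀ ≤ c x := by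
    intro r
    obtain ⟨x₀, hx₀, hmin⟩ := ((range A).filter (· % G = r % G)).exists_min_image c
      ⟨r % G, by simp [(Nat.mod_lt r hG).trans_le hGA]⟩
    simp only [mem_filter, mem_range] at hx₀ hmin
    exact ⟨x₀, hx₀.1, hx₀.2, fun x hx hxr => hmin x ⟨hx, hxr⟩⟩
  choose low hlowA hlowG hlowmin using hlow
  have hc' : ∀ x < A, ∃ k : ℕ, c x - c (low (x % G)) = k := by
    intro x hx
    have ht : x % G < B := (Nat.mod_lt x hG).trans_le hGB
    obtain ⟨k₁, hk₁⟩ := hval x hx (x % G) ht (Nat.mod_mod x G).symm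
    obtain ⟨k₂, hk₂⟩ := hval _ (hlowA (x % G)) (x % G) ht (by rw [hlowG, Nat.mod_mod])
    have hk : k₂ ≤ k₁ := by
      have := hlowmin (x % G) x hx (Nat.mod_mod x G).symm
      exact_mod_cast (hk₂.symm.trans_le (by linarith)).trans_eq hk₁
    exact ⟨k₁ - k₂, by push_cast [hk]; linarith⟩
  have hd' : ∀ y < B, ∃ k : ℕ, d y + c (low (y % G)) = k := fun y hy => by
    simpa only [add_comm] using hval _ (hlowA (y % G)) y hy (by rw [hlowG, Nat.mod_mod])
  refine ⟨fun x => ⌊c x - c (low (x % G))⌋₊, fun y => ⌊d y + c (low (y % G))⌋₊, fun m => ?_⟩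
  obtain ⟨k₁, hk₁⟩ := hc' (m % A) (Nat.mod_lt _ hA0)
  obtain ⟨k₂, hk₂⟩ := hd' (m % B) (Nat.mod_lt _ (hGB.trans_lt' hG))
  have hmod : (m : ℕ) % A % G = m % B % G := by
    rw [Nat.mod_mod_of_dvd _ (Nat.gcd_dvd_left A B), Nat.mod_mod_of_dvd _ (Nat.gcd_dvd_right A B)]
  simp only [hk₁, hk₂, Nat.floor_natCast]
  have : (α m : ℚ) = k₁ + k₂ := by rw [hcd m, ← hk₁, ← hk₂, hmod]; ring
  exact_mod_cast this

lemma Nat.add_gcd_div_div_eq_totient_add {n p q : ℕ} (hp : p.Prime) (hq : q.Prime) (hne : p ≠ q)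
    (hfac : n.primeFactors = {p, q}) :
    n + (n / p).gcd (n / q) = n / p + n / q + n.totient := by
  have hpq : p * q ∣ n := ((Nat.coprime_primes hp hq).2 hne).mul_dvd_of_dvd_of_dvd
    (Nat.dvd_of_mem_primeFactors (by simp [hfac])) (Nat.dvd_of_mem_primeFactors (by simp [hfac]))
  obtain ⟨k, rfl⟩ := hpq
  have htot := Nat.totient_mul_prod_primeFactors (p * q * k)
  rw [hfac, prod_pair hne, prod_pair hne] at htot
  have hφ : (p * q * k).totient = k * (p - 1) * (q - 1) := by
    apply Nat.eq_of_mul_eq_mul_right (Nat.mul_pos hp.pos hq.pos)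
    rw [htot]; ring
  have hnp : p * q * k / p = q * k := by rw [mul_assoc, Nat.mul_div_cancel_left _ hp.pos]
  have hnq : p * q * k / q = p * k := by
    rw [mul_comm p q, mul_assoc, Nat.mul_div_cancel_left _ hq.pos]
  rw [hφ, hnp, hnq, Nat.gcd_mul_right, (Nat.coprime_primes hq hp).2 hne.symm, one_mul]
  obtain ⟨p', rfl⟩ := Nat.exists_eq_add_one_of_ne_zero hp.ne_zero
  obtain ⟨q', rfl⟩ := Nat.exists_eq_add_one_of_ne_zero hq.ne_zero
  simp only [Nat.add_sub_cancel]
  ring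

lemma cycVec_apply {n d i : ℕ} (hdn : d ∣ n) (hi : i < n / d) (m : Fin n) :
    cycVec n d i m = if (m : ℕ) % (n / d) = i then 1 else 0 := by
  have hA : 0 < n / d := by omega
  have hmd : (m : ℕ) / (n / d) < d :=
    Nat.div_lt_of_lt_mul (by rw [Nat.div_mul_cancel hdn]; exact m.2)
  have key : ∀ j, (m : ℕ) = i + n / d * j ↔ (m : ℕ) % (n / d) = i ∧ (m : ℕ) / (n / d) = j := by
    intro j
    rw [and_comm, Nat.div_mod_unique hA]
    omega
  simp only [cycVec, stdVec, Finset.sum_apply, key, ite_and]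
  split_ifs with h
  · simp [hmd]
  · simp

lemma sum_smul_cycVec_apply {n d : ℕ} (hd : 0 < d) (hdn : d ∣ n) (c : ℕ → ℤ) (m : Fin n) :
    (∑ i ∈ range (n / d), c i • cycVec n d i) m = c (m % (n / d)) := by
  have hA : 0 < n / d := Nat.div_pos (Nat.le_of_dvd m.pos hdn) hd
  rw [Finset.sum_apply]
  simp only [Pi.smul_apply, smul_eq_mul]
  rw [Finset.sum_congr rfl fun i hi => by rw [cycVec_apply hdn (mem_range.1 hi)]]
  simp [Nat.mod_lt _ hA]

/-- If `n` has exactly two distinct prime factors `p` and `q`, every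
`α ∈ V_n ∩ (ℤ_{≥0})^n` is a `ℤ_{≥0}`-combination of the `v^(p)_i` and `v^(q)_i`. -/
theorem stmt8 (n p q : ℕ) (hn : 0 < n) (hp : p.Prime) (hq : q.Prime) (hne : p ≠ q)
    (hfac : n.primeFactors = {p, q})
    (ζ : ℂ) (hζ : IsPrimitiveRoot ζ n)
    (α : Fin n → ℤ) (hpos : ∀ m : Fin n, 0 ≤ α m)
    (hV : ∑ m : Fin n, (α m : ℂ) * ζ ^ (m : ℕ) = 0) :
    ∃ c d : ℕ → ℕ,
      α = ∑ i ∈ Finset.range (n / p), (c i : ℤ) • cycVec n p i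
        + ∑ i ∈ Finset.range (n / q), (d i : ℤ) • cycVec n q i := by
  have hpn : p ∣ n := Nat.dvd_of_mem_primeFactors (by simp [hfac])
  have hqn : q ∣ n := Nat.dvd_of_mem_primeFactors (by simp [hfac])
  have : NeZero (n / p) := ⟨(Nat.div_pos (Nat.le_of_dvd hn hpn) hp.pos).ne'⟩
  have : NeZero (n / q) := ⟨(Nat.div_pos (Nat.le_of_dvd hn hqn) hq.pos).ne'⟩
  obtain ⟨c, d, hcd⟩ := hζ.exists_residue_decomposition (Nat.div_dvd_of_dvd hpn)
    (Nat.div_lt_self hn hp.one_lt) (Nat.div_dvd_of_dvd hqn) (Nat.div_lt_self hn hq.one_lt)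
    (Nat.add_gcd_div_div_eq_totient_add hp hq hne hfac).le (α := fun m => α m)
    (by simpa only [Rat.cast_intCast] using hV)
  obtain ⟨c', d', hα⟩ := exists_nat_residue_decomposition hn (Nat.div_dvd_of_dvd hpn)
    (Nat.div_dvd_of_dvd hqn) hpos hcd
  refine ⟨c', d', funext fun m => ?_⟩
  rw [Pi.add_apply, sum_smul_cycVec_apply hp.pos hpn, sum_smul_cycVec_apply hq.pos hqn, hα m]
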